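/- arXiv:2401.17687 — 2 statements merged into one kernel-verified Lean document; each statement's English description precedes it below -/
import Mathlib

section
/- Let E_q(t) = ∑_{n≥0} q^{binom(n,2)} t^n/[n]_q! and F(t) = ∑_{n≥1} f_n t^n/[n]_q!. Then E_q[F]*_q = ∑_{n≥0} γ*_n t^n/[n]_q! if and only if γ*_0 = 1 and γ*_{n+1} = ∑_{k=0}^n binom[n,k]_q q^{n-k} γ*_{n-k} f_{k+1} for all n ≥ 0. -/
/-- The q-integer `[n]_q = 1 + q + ... + q^{n-1}`. -/
noncomputable def qInt {K : Type*} [CommRing K] (q : K) (n : ℕ) : K :=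
  ∑ i ∈ Finset.range n, q ^ i

/-- The q-factorial `[n]_q!`. -/
noncomputable def qFact {K : Type*} [CommRing K] (q : K) (n : ℕ) : K :=
  ∏ i ∈ Finset.range n, qInt q (i + 1)

/-- The Gaussian binomial coefficient. -/
noncomputable def qBinom {K : Type*} [Field K] (q : K) (n k : ℕ) : K :=
  qFact q n / (qFact q k * qFact q (n - k))

/-- The q-derivative `D_q F(t) = (F(qt) - F(t))/((q-1)t)`. -/
noncomputable def qDeriv {K : Type*} [CommRing K] (q : K) (F : PowerSeries K) :
    PowerSeries K :=
  PowerSeries.mk fun n => qInt q (n + 1) * PowerSeries.coeff (R := K) (n + 1) F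

/-! Applying `D_q` termwise to `C = E_q[F]*_q = ∑ q^{C(k,2)} F^{[k]*}/[k]_q!` and using
`D_q F^{[k]*} = [k]_q q^{1-k} F^{[k-1]*}(qt) · D_q F`, the scalar `q^{C(k,2)}/[k]_q! · [k]_q q^{1-k}`
collapses to `q^{C(k-1,2)}/[k-1]_q!`, so `C` solves the linear q-difference equation
`D_q C(t) = C(qt) · D_q F(t)`. Comparing coefficients of `tⁿ` in it gives the recurrence for
`γ*ₙ = [n]_q! cₙ`, and with `c₀ = 1` this recurrence pins `γ*` down. -/

open PowerSeries Finset

section CommRing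

variable {K : Type*} [CommRing K] (q : K)

theorem qFact_zero : qFact q 0 = 1 := prod_range_zero _

theorem qFact_succ (n : ℕ) : qFact q (n + 1) = qFact q n * qInt q (n + 1) :=
  prod_range_succ _ _

theorem coeff_qDeriv (φ : K⟦X⟧) (n : ℕ) :
    coeff n (qDeriv q φ) = qInt q (n + 1) * coeff (n + 1) φ :=
  coeff_mk _ _

theorem qDeriv_one : qDeriv q 1 = 0 := by
  ext n
  simp [coeff_qDeriv, coeff_one]

theorem qDeriv_C_mul (c : K) (φ : K⟦X⟧) : qDeriv q (C c * φ) = C c * qDeriv q φ := by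
  ext n
  simp only [coeff_qDeriv, coeff_C_mul]
  ring

theorem qDeriv_sum {ι : Type*} (s : Finset ι) (φ : ι → K⟦X⟧) :
    qDeriv q (∑ i ∈ s, φ i) = ∑ i ∈ s, qDeriv q (φ i) := by
  ext n
  simp only [coeff_qDeriv, map_sum, mul_sum]

theorem rescale_C_mul (a c : K) (φ : K⟦X⟧) : rescale a (C c * φ) = C c * rescale a φ := by
  ext n
  simp only [coeff_rescale, coeff_C_mul]
  ring

theorem coeff_mul_congr_left {φ φ' : K⟦X⟧} (ψ : K⟦X⟧) {n : ℕ}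
    (h : ∀ i ≤ n, coeff i φ = coeff i φ') : coeff n (φ * ψ) = coeff n (φ' * ψ) := by
  simp only [coeff_mul]
  exact sum_congr rfl fun p hp => by rw [h p.1 (Finset.HasAntidiagonal.antidiagonal.fst_le hp)]

end CommRing

theorem eq_iff_of_recurrence {M : Type*} [AddCommMonoid M] {g γ : ℕ → M} {c : M}
    (u : ℕ → ℕ → M → M) (hg0 : g 0 = c)
    (hg : ∀ n, g (n + 1) = ∑ k ∈ range (n + 1), u n k (g (n - k))) :
    γ = g ↔ γ 0 = c ∧ ∀ n, γ (n + 1) = ∑ k ∈ range (n + 1), u n k (γ (n - k)) := by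
  refine ⟨by rintro rfl; exact ⟨hg0, hg⟩, fun ⟨hγ0, hγ⟩ => funext fun n => ?_⟩
  induction n using Nat.strong_induction_on with
  | _ n ih =>
    cases n with
    | zero => rw [hγ0, hg0]
    | succ m =>
      rw [hγ m, hg m]
      exact sum_congr rfl fun k _ => by rw [ih (m - k) (by omega)]

section Field

variable {K : Type*} [Field K] {q : K} {F : K⟦X⟧} {Fk : ℕ → K⟦X⟧}

theorem qFact_ne_zero (hq : ∀ n, qInt q (n + 1) ≠ 0) (n : ℕ) : qFact q n ≠ 0 :=
  prod_ne_zero_iff.2 fun i _ => hq i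

theorem coeff_eq_zero_of_lt_of_qDeriv_eq (hq : ∀ n, qInt q (n + 1) ≠ 0)
    (hFkc : ∀ k, 0 < k → constantCoeff (Fk k) = 0)
    (hFkrec : ∀ k, 0 < k → qDeriv q (Fk k) =
      C (qInt q k * (q ^ (k - 1))⁻¹) * rescale q (Fk (k - 1)) * qDeriv q F) :
    ∀ {k m : ℕ}, m < k → coeff m (Fk k) = 0 := by
  intro k
  induction k with
  | zero => intro m hm; omega
  | succ k ih =>
    rintro (_ | s) hs
    · simpa using hFkc (k + 1) k.succ_pos
    · have h := coeff_qDeriv q (Fk (k + 1)) s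
      rw [hFkrec (k + 1) k.succ_pos, mul_assoc, coeff_C_mul,
        coeff_mul_congr_left _ (φ' := 0) fun i hi => by
          rw [coeff_rescale, Nat.add_sub_cancel, ih (by omega), mul_zero, map_zero]] at h
      simpa [hq s] using h


theorem qExp_coeff_succ_mul (hq0 : q ≠ 0) (hq : ∀ n, qInt q (n + 1) ≠ 0) (k : ℕ) :
    q ^ (k + 1).choose 2 / qFact q (k + 1) * (qInt q (k + 1) * (q ^ k)⁻¹) =
      q ^ k.choose 2 / qFact q k := by
  have hchoose : (k + 1).choose 2 = k.choose 2 + k := by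
    rw [Nat.choose_succ_succ, Nat.choose_one_right, add_comm]
  have := qFact_ne_zero hq k
  have := hq k
  have := pow_ne_zero k hq0
  rw [hchoose, pow_add, qFact_succ]
  field_simp

/-- The first `N` terms of `E_q[F]*_q`. Unlike `E_q[F]*_q` itself, which is given only
coefficientwise, this is a finite sum of power series, so `D_q` can be applied to it termwise. -/
noncomputable def qExpCompTrunc (q : K) (Fk : ℕ → K⟦X⟧) (N : ℕ) : K⟦X⟧ :=
  ∑ k ∈ range N, C (q ^ k.choose 2 / qFact q k) * Fk k

theorem coeff_qExpCompTrunc (hvan : ∀ {k m : ℕ}, m < k → coeff m (Fk k) = 0) {n N : ℕ}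
    (hn : n < N) : coeff n (qExpCompTrunc q Fk N) =
      ∑ k ∈ range (n + 1), q ^ k.choose 2 / qFact q k * coeff n (Fk k) := by
  simp only [qExpCompTrunc, map_sum, coeff_C_mul]
  refine (sum_subset (range_subset_range.2 hn) fun k _ hk => ?_).symm
  rw [hvan (by simpa using hk), mul_zero]

theorem qDeriv_qExpCompTrunc_succ (hq0 : q ≠ 0) (hq : ∀ n, qInt q (n + 1) ≠ 0)
    (hFk0 : Fk 0 = 1)
    (hFkrec : ∀ k, 0 < k → qDeriv q (Fk k) =
      C (qInt q k * (q ^ (k - 1))⁻¹) * rescale q (Fk (k - 1)) * qDeriv q F) (N : ℕ) :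
    qDeriv q (qExpCompTrunc q Fk (N + 1)) = rescale q (qExpCompTrunc q Fk N) * qDeriv q F := by
  rw [qExpCompTrunc, qDeriv_sum, sum_range_succ', hFk0, qDeriv_C_mul, qDeriv_one, mul_zero,
    add_zero, qExpCompTrunc, map_sum, sum_mul]
  refine sum_congr rfl fun k _ => ?_
  rw [qDeriv_C_mul, hFkrec (k + 1) k.succ_pos, Nat.add_sub_cancel, ← mul_assoc, ← mul_assoc,
    ← map_mul, qExp_coeff_succ_mul hq0 hq, rescale_C_mul]

theorem qDeriv_eq_rescale_mul_qDeriv (hq0 : q ≠ 0) (hq : ∀ n, qInt q (n + 1) ≠ 0)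
    (hFk0 : Fk 0 = 1)
    (hFkrec : ∀ k, 0 < k → qDeriv q (Fk k) =
      C (qInt q k * (q ^ (k - 1))⁻¹) * rescale q (Fk (k - 1)) * qDeriv q F)
    (hvan : ∀ {k m : ℕ}, m < k → coeff m (Fk k) = 0) {G : K⟦X⟧}
    (hG : ∀ n, coeff n G = ∑ k ∈ range (n + 1), q ^ k.choose 2 / qFact q k * coeff n (Fk k)) :
    qDeriv q G = rescale q G * qDeriv q F := by
  have hGtrunc : ∀ {n N : ℕ}, n < N → coeff n G = coeff n (qExpCompTrunc q Fk N) :=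
    fun hn => (hG _).trans (coeff_qExpCompTrunc hvan hn).symm
  ext n
  rw [coeff_qDeriv, hGtrunc (N := n + 2) (by omega), ← coeff_qDeriv,
    qDeriv_qExpCompTrunc_succ hq0 hq hFk0 hFkrec]
  exact coeff_mul_congr_left _ fun i hi => by
    rw [coeff_rescale, coeff_rescale, hGtrunc (N := n + 1) (by omega)]

end Field

theorem qFact_mul_coeff_succ_of_qDeriv_eq {K : Type*} [Field K] {q : K}
    (hq : ∀ n, qInt q (n + 1) ≠ 0) {f : ℕ → K} {G : K⟦X⟧}
    (hG : qDeriv q G = rescale q G * qDeriv q (mk fun n => f n / qFact q n)) (n : ℕ) :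
    qFact q (n + 1) * coeff (n + 1) G = ∑ k ∈ range (n + 1),
      qBinom q n k * q ^ (n - k) * (qFact q (n - k) * coeff (n - k) G) * f (k + 1) := by
  have h := congrArg (coeff n) hG
  rw [coeff_qDeriv, mul_comm (rescale q G), coeff_mul,
    Nat.sum_antidiagonal_eq_sum_range_succ_mk] at h
  rw [qFact_succ, mul_assoc, h, mul_sum]
  refine sum_congr rfl fun k hk => ?_
  have hkn : k ≤ n := Nat.lt_succ_iff.1 (mem_range.1 hk)
  have := qFact_ne_zero hq k
  have := qFact_ne_zero hq (n - k)
  have := hq k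
  simp only [coeff_rescale, coeff_qDeriv, coeff_mk, qBinom, qFact_succ]
  field_simp

theorem stmt16_general {K : Type*} [Field K] (q : K) (hq0 : q ≠ 0)
    (hq : ∀ m : ℕ, 1 ≤ m → qInt q m ≠ 0)
    (f : ℕ → K)
    (F : PowerSeries K) (hFdef : F = PowerSeries.mk fun n => f n / qFact q n)
    (Fk : ℕ → PowerSeries K) (hFk0 : Fk 0 = 1)
    (hFkc : ∀ k, 0 < k → PowerSeries.constantCoeff (R := K) (Fk k) = 0)
    (hFkrec : ∀ k, 0 < k → qDeriv q (Fk k) =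
      PowerSeries.C (R := K) (qInt q k * (q ^ (k - 1))⁻¹) *
        PowerSeries.rescale q (Fk (k - 1)) * qDeriv q F)
    (Cs : PowerSeries K)
    (hC : ∀ n, PowerSeries.coeff (R := K) n Cs =
      ∑ k ∈ Finset.range (n + 1),
        q ^ Nat.choose k 2 / qFact q k * PowerSeries.coeff (R := K) n (Fk k))
    (γ : ℕ → K) :
    (∀ n, PowerSeries.coeff (R := K) n Cs = γ n / qFact q n) ↔
      (γ 0 = 1 ∧ ∀ n, γ (n + 1) =
        ∑ k ∈ Finset.range (n + 1),
          qBinom q n k * q ^ (n - k) * γ (n - k) * f (k + 1)) := by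
  have hq' : ∀ n, qInt q (n + 1) ≠ 0 := fun n => hq (n + 1) n.succ_pos
  have hCs := qDeriv_eq_rescale_mul_qDeriv hq0 hq' hFk0 hFkrec
    (coeff_eq_zero_of_lt_of_qDeriv_eq hq' hFkc hFkrec) hC
  subst hFdef
  have hCs0 : coeff 0 Cs = 1 := by simp [hC, hFk0, qFact_zero]
  calc (∀ n, coeff n Cs = γ n / qFact q n) ↔ γ = fun n => qFact q n * coeff n Cs := by
        simp only [funext_iff, eq_div_iff (qFact_ne_zero hq' _), eq_comm, mul_comm]
    _ ↔ _ := eq_iff_of_recurrence (fun n k x => qBinom q n k * q ^ (n - k) * x * f (k + 1))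
        (by simp [qFact_zero, hCs0]) (qFact_mul_coeff_succ_of_qDeriv_eq hq' hCs)

/-- Proposition 6.6: with `E_q(t) = ∑ q^{C(n,2)} tⁿ/[n]!`, `F = ∑_{n≥1} fₙ tⁿ/[n]!`,
`Fk` the starred q-powers of `F`, and `Cs = E_q[F]*_q` (coefficientwise):
`E_q[F]*_q = ∑ γ*ₙ tⁿ/[n]!` iff `γ*₀ = 1` and
`γ*_{n+1} = ∑_{k=0}^n [n,k]_q q^{n-k} γ*_{n-k} f_{k+1}`. -/
theorem stmt16 {K : Type*} [Field K] (q : K) (hq0 : q ≠ 0)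
    (hq : ∀ m : ℕ, 1 ≤ m → qInt q m ≠ 0)
    (f : ℕ → K) (hf0 : f 0 = 0)
    (F : PowerSeries K) (hFdef : F = PowerSeries.mk fun n => f n / qFact q n)
    (Fk : ℕ → PowerSeries K) (hFk0 : Fk 0 = 1)
    (hFkc : ∀ k, 0 < k → PowerSeries.constantCoeff (R := K) (Fk k) = 0)
    (hFkrec : ∀ k, 0 < k → qDeriv q (Fk k) =
      PowerSeries.C (R := K) (qInt q k * (q ^ (k - 1))⁻¹) *
        PowerSeries.rescale q (Fk (k - 1)) * qDeriv q F)
    (Cs : PowerSeries K)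
    (hC : ∀ n, PowerSeries.coeff (R := K) n Cs =
      ∑ k ∈ Finset.range (n + 1),
        q ^ Nat.choose k 2 / qFact q k * PowerSeries.coeff (R := K) n (Fk k))
    (γ : ℕ → K) :
    (∀ n, PowerSeries.coeff (R := K) n Cs = γ n / qFact q n) ↔
      (γ 0 = 1 ∧ ∀ n, γ (n + 1) =
        ∑ k ∈ Finset.range (n + 1),
          qBinom q n k * q ^ (n - k) * γ (n - k) * f (k + 1)) :=
  stmt16_general q hq0 hq f F hFdef Fk hFk0 hFkc hFkrec Cs hC γ
end

section
/- In the ring of formal power series in q and t over the symmetric functions, the elementary symmetric generating series factors as E(t) = ∑_{n≥0} e_n t^n = ∏_{k=0}^{∞} (1 + (1-q) ∑_{n≥1} [p_n]_q (-q^k t)^n)^{-1}, and dually H(t) = ∑_{n≥0} h_n t^n = ∏_{k=0}^{∞} (1 + (1-q) ∑_{n≥1} [p_n]_q (q^k t)^n), where the infinite products converge formally. -/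
/-!
Write `Φ(t) = 1 + (1 - q) ∑_{n ≥ 1} [pₙ] tⁿ`. The q-difference equation
`E(qt) = E(t) + (q - 1) t D_q E(t)` together with the definition of the `[pₙ]` gives
`E(qt) = E(t) Φ(-t)`. Iterating, `E(t) = E(q^M t) ∏_{k<M} Φ(-qᵏt)⁻¹`, and `E(q^M t) ≡ 1` modulo
`q^M` in every positive `t`-degree, so the partial products converge to `E`. Substituting
`t ↦ -t` gives `E(-qt) = E(-t) Φ(t)`, hence `H(t) = ∏_{k<M} Φ(qᵏt) · H(q^M t)` for the inverse
`H(t)` of `E(-t)`, and the same argument applies.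
-/

open PowerSeries

section Rescale

variable {R : Type*} [CommRing R]

theorem rescale_eq_add_C_mul_X_mul_qDeriv (q : R) (F : R⟦X⟧) :
    rescale q F = F + C (q - 1) * X * qDeriv q F := by
  ext (_ | n)
  · simp [mul_assoc]
  · rw [coeff_rescale, map_add, mul_assoc, coeff_C_mul, coeff_succ_X_mul, qDeriv, coeff_mk,
      qInt, ← mul_assoc, mul_comm (q - 1), geom_sum_mul]
    ring

theorem constantCoeff_rescale (a : R) (F : R⟦X⟧) :
    constantCoeff (rescale a F) = constantCoeff F := by
  rw [← coeff_zero_eq_constantCoeff_apply, coeff_rescale, pow_zero, one_mul,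
    coeff_zero_eq_constantCoeff_apply]

variable {q : R} {A F : R⟦X⟧}

theorem mul_prod_rescale_pow_eq (hAF : A * F = rescale q A) (M : ℕ) :
    A * ∏ k ∈ Finset.range M, rescale (q ^ k) F = rescale (q ^ M) A := by
  induction M with
  | zero => simp
  | succ M ih =>
    rw [Finset.prod_range_succ, ← mul_assoc, ih, ← map_mul, hAF, rescale_rescale, pow_succ']

theorem rescale_pow_mul_prod_invOfUnit_eq (hAF : A * F = rescale q A)
    (hF : constantCoeff F = 1) (M : ℕ) :
    rescale (q ^ M) A * ∏ k ∈ Finset.range M, invOfUnit (rescale (q ^ k) F) 1 = A := by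
  rw [← mul_prod_rescale_pow_eq hAF, mul_assoc, ← Finset.prod_mul_distrib,
    Finset.prod_eq_one fun k _ => mul_invOfUnit _ 1 (by rw [constantCoeff_rescale, hF]; rfl),
    mul_one]

theorem prod_rescale_pow_mul_rescale_pow_eq {H : R⟦X⟧} (hAF : A * F = rescale q A)
    (hAH : A * H = 1) (M : ℕ) :
    (∏ k ∈ Finset.range M, rescale (q ^ k) F) * rescale (q ^ M) H = H := by
  calc (∏ k ∈ Finset.range M, rescale (q ^ k) F) * rescale (q ^ M) H
      = H * (A * ∏ k ∈ Finset.range M, rescale (q ^ k) F) * rescale (q ^ M) H := by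
        rw [← mul_assoc, mul_comm H, hAH, one_mul]
    _ = H * rescale (q ^ M) (A * H) := by
        rw [mul_prod_rescale_pow_eq hAF, map_mul, mul_assoc]
    _ = H := by rw [hAH, map_one, mul_one]

end Rescale

section Stabilization

variable {K : Type*} [CommRing K]

theorem coeff_coeff_rescale_X_pow_mul {A : K⟦X⟧⟦X⟧} (hA : constantCoeff A = 1)
    (B : K⟦X⟧⟦X⟧) {i j M : ℕ} (hiM : i < M) :
    coeff i (coeff j (rescale (X ^ M) A * B)) = coeff i (coeff j B) := by
  rw [coeff_mul, map_sum, Finset.sum_eq_single (0, j)]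
  · simp [hA]
  · rintro ⟨a, b⟩ hab hne
    have ha : a ≠ 0 := by rintro rfl; simp_all
    simp only at hab ⊢
    rw [coeff_rescale, ← pow_mul, mul_assoc, coeff_X_pow_mul', if_neg]
    have := Nat.le_mul_of_pos_right M (Nat.pos_of_ne_zero ha)
    omega
  · simp

theorem exists_forall_ge_coeff_coeff_eq {A B : K⟦X⟧⟦X⟧} {P : ℕ → K⟦X⟧⟦X⟧}
    (hA : constantCoeff A = 1) (hP : ∀ M, rescale (X ^ M) A * P M = B) (i j : ℕ) :
    ∃ N, ∀ M ≥ N, coeff i (coeff j (P M)) = coeff i (coeff j B) :=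
  ⟨i + 1, fun M hM => by rw [← hP M, coeff_coeff_rescale_X_pow_mul hA _ (by omega)]⟩

end Stabilization

section PowerSums

variable {R : Type*} [CommRing R]

noncomputable def qPowerSumFactor (q : R) (p : ℕ → R) : R⟦X⟧ :=
  mk fun n => if n = 0 then 1 else (1 - q) * p n

theorem rescale_qPowerSumFactor (q c : R) (p : ℕ → R) :
    rescale c (qPowerSumFactor q p) =
      mk fun n => if n = 0 then 1 else (1 - q) * (c ^ n * p n) := by
  rw [qPowerSumFactor, rescale_mk]
  congr 1
  funext n
  split_ifs with hn
  · simp [hn]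
  · ring

theorem rescale_neg_one_qPowerSumFactor (q : R) (p : ℕ → R) :
    rescale (-1) (qPowerSumFactor q p) =
      1 + C (q - 1) * X * mk fun n => (-1) ^ n * p (n + 1) := by
  ext (_ | n)
  · simp [qPowerSumFactor]
  · rw [rescale_qPowerSumFactor, coeff_mk, if_neg n.succ_ne_zero, map_add, mul_assoc,
      coeff_C_mul, coeff_succ_X_mul, coeff_mk, coeff_one, if_neg n.succ_ne_zero]
    ring

theorem rescale_pow_qPowerSumFactor (q : R) (p : ℕ → R) (k : ℕ) :
    rescale (q ^ k) (qPowerSumFactor q p) =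
      mk fun n => if n = 0 then 1 else (1 - q) * (q ^ (k * n) * p n) := by
  simp only [rescale_qPowerSumFactor, pow_mul]

theorem rescale_pow_rescale_neg_one_qPowerSumFactor (q : R) (p : ℕ → R) (k : ℕ) :
    rescale (q ^ k) (rescale (-1) (qPowerSumFactor q p)) =
      mk fun n => if n = 0 then 1 else (1 - q) * ((-1) ^ n * q ^ (k * n) * p n) := by
  rw [rescale_rescale, rescale_qPowerSumFactor]
  simp only [mul_pow, pow_mul]

variable {q : R} {p : ℕ → R} {E : R⟦X⟧}

theorem mul_rescale_neg_one_qPowerSumFactor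
    (hE : qDeriv q E = E * mk fun n => (-1) ^ n * p (n + 1)) :
    E * rescale (-1) (qPowerSumFactor q p) = rescale q E := by
  rw [rescale_eq_add_C_mul_X_mul_qDeriv q, hE, rescale_neg_one_qPowerSumFactor]
  ring

theorem rescale_neg_one_mul_qPowerSumFactor
    (hE : qDeriv q E = E * mk fun n => (-1) ^ n * p (n + 1)) :
    rescale (-1) E * qPowerSumFactor q p = rescale q (rescale (-1) E) := by
  have := congrArg (rescale (-1)) (mul_rescale_neg_one_qPowerSumFactor hE)
  rw [map_mul, rescale_rescale, rescale_rescale, neg_one_mul, neg_neg, rescale_one,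
    RingHom.id_apply] at this
  rwa [rescale_rescale, mul_comm (-1)]

end PowerSums

/-- `B[[q,t]]` is realized as `PowerSeries (PowerSeries K)`, with outer variable `t` and inner
variable `q = X`; formal convergence of the products means that every coefficient of `qⁱtʲ` of
the partial products eventually stabilizes. -/
theorem stmt19 {K : Type*} [CommRing K] (e : ℕ → K) (h p : ℕ → PowerSeries K)
    (he0 : e 0 = 1)
    (hdefp : qDeriv (PowerSeries.X : PowerSeries K)
        (PowerSeries.mk fun n => PowerSeries.C (R := K) (e n)) =
      PowerSeries.mk (fun n => PowerSeries.C (R := K) (e n)) *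
        PowerSeries.mk (fun n => (-1 : PowerSeries K) ^ n * p (n + 1)))
    (hH : PowerSeries.rescale (-1 : PowerSeries K)
        (PowerSeries.mk fun n => PowerSeries.C (R := K) (e n)) * PowerSeries.mk h = 1) :
    (∀ i j : ℕ, ∃ N : ℕ, ∀ M ≥ N,
      PowerSeries.coeff (R := K) i (PowerSeries.coeff (R := PowerSeries K) j
        (∏ k ∈ Finset.range M, PowerSeries.invOfUnit
          (PowerSeries.mk fun n => if n = 0 then (1 : PowerSeries K)
            else (1 - PowerSeries.X) * ((-1) ^ n * PowerSeries.X ^ (k * n) * p n)) 1))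
      = PowerSeries.coeff (R := K) i (PowerSeries.coeff (R := PowerSeries K) j
          (PowerSeries.mk fun n => PowerSeries.C (R := K) (e n)))) ∧
    (∀ i j : ℕ, ∃ N : ℕ, ∀ M ≥ N,
      PowerSeries.coeff (R := K) i (PowerSeries.coeff (R := PowerSeries K) j
        (∏ k ∈ Finset.range M,
          PowerSeries.mk fun n => if n = 0 then (1 : PowerSeries K)
            else (1 - PowerSeries.X) * (PowerSeries.X ^ (k * n) * p n)))
      = PowerSeries.coeff (R := K) i (PowerSeries.coeff (R := PowerSeries K) j
          (PowerSeries.mk h))) := by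
  set E : K⟦X⟧⟦X⟧ := mk fun n => C (e n)
  have hE0 : constantCoeff E = 1 := by simp [E, he0]
  have hH0 : constantCoeff (mk h) = 1 := by
    simpa [constantCoeff_rescale, hE0] using congrArg constantCoeff hH
  constructor
  · refine exists_forall_ge_coeff_coeff_eq hE0 fun M => ?_
    simp_rw [← rescale_pow_rescale_neg_one_qPowerSumFactor]
    exact rescale_pow_mul_prod_invOfUnit_eq (mul_rescale_neg_one_qPowerSumFactor hdefp)
      (by simp [constantCoeff_rescale, qPowerSumFactor]) M
  · refine exists_forall_ge_coeff_coeff_eq hH0 fun M => ?_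
    simp_rw [← rescale_pow_qPowerSumFactor]
    rw [mul_comm]
    exact prod_rescale_pow_mul_rescale_pow_eq (rescale_neg_one_mul_qPowerSumFactor hdefp) hH M
end
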